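/- Let r ∈ C¹([0,∞),(0,∞)) with r(y) → +∞ as y → +∞, satisfying: (1) there is C₁ > 0 with ∫₀^y r(u)^{3/2} du ≤ C₁·y·r(y)^{3/2} for all large y; (2) there is C₂ > 0 with |r'(y)|·r(y)^{−5/2}·∫₀^y r(u)^{3/2} du ≤ C₂ for all large y; (3) r(y)^{1/2}/∫₀^y r(u)^{3/2} du → 0 as y → +∞. Fix a constant κ > 0 (in the paper κ = ‖A_{1,π/2}^{−1}‖, the operator norm of the inverse of the complex Airy operator −∂_x² + ix). Since y ↦ ∫₀^y r(u)^{3/2}du is a strictly increasing bijection of [0,∞) onto [0,∞), there is a unique function V₂ : [0,∞) → [0,∞) with κ^{−3/2}·∫₀^{V₂(x)} r(u)^{3/2} du = x for all x ≥ 0. Then V₂ is C², the purely imaginary potential V := i·V₂ satisfies Assumption (iR) with ν = −1 and l = 0, and for all sufficiently large b: κ·(V₂'(x_b))^{−2/3} = r(b), where x_b is defined by V₂(x_b) = b. -/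

import Mathlib

open MeasureTheory Filter

/-- The L² norm over the half-line (0,∞). -/
noncomputable def L2P (f : ℝ → ℂ) : ℝ :=
  (eLpNorm f 2 (volume.restrict (Set.Ioi (0:ℝ)))).toReal

/-- The L² norm over ℝ. -/
noncomputable def L2R (f : ℝ → ℂ) : ℝ :=
  (eLpNorm f 2 volume).toReal

/-- V₂ = Im V. -/
noncomputable def ImV (V : ℝ → ℂ) (x : ℝ) : ℝ := (V x).im

/-- V₁ = Re V. -/
noncomputable def ReV (V : ℝ → ℂ) (x : ℝ) : ℝ := (V x).re

/-- Υ(x) = x^ν · (V₂'(x))^(−1/3). -/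
noncomputable def Upsilon (V : ℝ → ℂ) (ν x : ℝ) : ℝ :=
  x ^ ν * deriv (ImV V) x ^ (-(1:ℝ)/3)

/-- The complex number ρ·e^{iθ}. -/
noncomputable def polarC (ρ θ : ℝ) : ℂ := (ρ : ℂ) * Complex.exp (Complex.I * (θ : ℂ))

/-- κ_b = |r·e^{iθ} − r_b·e^{iθ_b}| with r = √(l²+1), θ = arg(l+i),
r_b = √((V₁'(x_b)/V₂'(x_b))²+1), θ_b = arg(V₁'(x_b)/V₂'(x_b) + i). -/
noncomputable def kappaB (V : ℝ → ℂ) (l xb : ℝ) : ℝ :=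
  norm
    (polarC (Real.sqrt (l ^ 2 + 1)) (Complex.arg ((l : ℂ) + Complex.I)) -
      polarC (Real.sqrt ((deriv (ReV V) xb / deriv (ImV V) xb) ^ 2 + 1))
        (Complex.arg (((deriv (ReV V) xb / deriv (ImV V) xb : ℝ) : ℂ) + Complex.I)))

/-- κ(r,θ) = inf over nonzero C_c^∞ functions φ of ‖−φ'' + r e^{iθ} x φ‖/‖φ‖,
the reciprocal of the norm of the inverse of the complex Airy operator A_{r,θ}. -/
noncomputable def airyResInvNorm (ρ θ : ℝ) : ℝ :=
  sInf { c : ℝ | ∃ φ : ℝ → ℂ, ContDiff ℝ (⊤ : ℕ∞) φ ∧ HasCompactSupport φ ∧ φ ≠ 0 ∧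
    c = L2R (fun x => -(deriv (deriv φ) x) + polarC ρ θ * (x : ℂ) * φ x) / L2R φ }

/-- Assumption (iR): V locally bounded on [0,∞), C² on (x₀,∞), Re V ≥ 0 a.e.,
V₂ unbounded and eventually increasing, controlled derivatives with parameter ν,
Υ → 0, and V₁'/V₂' → l ∈ [0,∞). -/
structure AssumptionIR (V : ℝ → ℂ) (x₀ ν l : ℝ) : Prop where
  x0_nonneg : 0 ≤ x₀
  nu_ge : -1 ≤ ν
  l_nonneg : 0 ≤ l
  loc_bdd : ∀ K : Set ℝ, IsCompact K → ∃ M : ℝ, ∀ x ∈ K ∩ Set.Ici (0:ℝ), ‖V x‖ ≤ M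
  smooth : ContDiffOn ℝ 2 V (Set.Ioi x₀)
  re_nonneg : ∀ᵐ x ∂(volume.restrict (Set.Ioi (0:ℝ))), 0 ≤ (V x).re
  im_unbounded : Tendsto (ImV V) atTop atTop
  im_deriv_pos : ∀ x > x₀, 0 < deriv (ImV V) x
  controlled : ∃ c > 0, ∀ x > x₀,
      deriv (ImV V) x ≤ c * ImV V x * x ^ ν ∧
      ‖deriv (deriv V) x‖ ≤ c * deriv (ImV V) x * x ^ ν
  upsilon_small : Tendsto (fun x => Upsilon V ν x) atTop (nhds 0)
  ratio_lim : Tendsto (fun x => deriv (ReV V) x / deriv (ImV V) x) atTop (nhds l)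

/-- The defining equation of the potential realising the prescribed resolvent growth
rate r: V₂ : [0,∞) → [0,∞) with κ^{−3/2} ∫₀^{V₂(x)} r(u)^{3/2} du = x for x ≥ 0. -/
def DefiningEq (r : ℝ → ℝ) (κ : ℝ) (V₂ : ℝ → ℝ) : Prop :=
  (∀ x ≥ (0:ℝ), 0 ≤ V₂ x) ∧
    ∀ x ≥ (0:ℝ), κ ^ (-(3:ℝ)/2) * ∫ u in (0:ℝ)..(V₂ x), r u ^ ((3:ℝ)/2) = x

/-! The map `y ↦ κ^{-3/2} ∫₀^y r^{3/2}` is a strictly increasing continuous bijection of `[0,∞)`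
with derivative `κ^{-3/2} r^{3/2} > 0`, and `V₂` is its inverse, so
`V₂' = κ^{3/2} r(V₂)^{-3/2}` and `V₂'' = -(3/2) κ^{3/2} r'(V₂) r(V₂)^{-5/2} V₂'`.
Since `κ^{3/2} x = ∫₀^y r^{3/2}` at `y = V₂ x`, multiplying by `x` turns conditions (1) and (2)
at `y` into the two bounds of (iR)(ii) with `ν = -1`, while `Υ(x) = κ r(y)^{1/2} / ∫₀^y r^{3/2}`
tends to `0` by (3), and `κ V₂'^{-2/3} = r(V₂)`. -/

open Set Topology

section RightInverse

variable {α β : Type*} [LinearOrder α] [LinearOrder β] {f : α → β} {g : β → α} {c : α}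
  {t : Set β}

theorem StrictMonoOn.continuousWithinAt_of_rightInvOn [TopologicalSpace α] [OrderTopology α]
    [TopologicalSpace β] [OrderTopology β]
    (hf : StrictMonoOn f (Ici c)) (hg : MapsTo g t (Ici c)) (hfg : RightInvOn g f t)
    {a : β} (ha : a ∈ t) : ContinuousWithinAt g t a := by
  refine tendsto_order.2 ⟨fun b hb => ?_, fun b hb => ?_⟩
  · rcases lt_or_ge b c with hbc | hcb
    · filter_upwards [self_mem_nhdsWithin] with x hx using hbc.trans_le (hg hx)
    · have hfb : f b < a := hfg ha ▸ hf hcb (hg ha) hb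
      filter_upwards [mem_nhdsWithin_of_mem_nhds (Ioi_mem_nhds hfb), self_mem_nhdsWithin]
        with x hfx hx
      exact lt_of_not_ge fun hxb => (hfg hx ▸ hf.monotoneOn (hg hx) hcb hxb).not_gt hfx
  · have hcb : c ≤ b := (hg ha).trans hb.le
    have hfb : a < f b := hfg ha ▸ hf (hg ha) hcb hb
    filter_upwards [mem_nhdsWithin_of_mem_nhds (Iio_mem_nhds hfb), self_mem_nhdsWithin]
      with x hfx hx
    exact lt_of_not_ge fun hbx => (hfg hx ▸ hf.monotoneOn hcb (hg hx) hbx).not_gt hfx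

theorem StrictMonoOn.tendsto_atTop_of_rightInvOn {d : β} (hf : StrictMonoOn f (Ici c))
    (hfc : MapsTo f (Ici c) (Ici d)) (hg : MapsTo g (Ici d) (Ici c))
    (hfg : RightInvOn g f (Ici d)) : Tendsto g atTop atTop := by
  refine tendsto_atTop.2 fun M => ?_
  have hM : max M c ∈ Ici c := le_max_right M c
  filter_upwards [eventually_ge_atTop (f (max M c))] with x hx
  have hxd : x ∈ Ici d := le_trans (hfc hM) hx
  refine (le_max_left M c).trans (le_of_not_gt fun hlt => ?_)
  exact (hfg hxd ▸ hf (hg hxd) hM hlt).not_ge hx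

end RightInverse

theorem HasDerivWithinAt.of_rightInvOn {𝕜 : Type*} [NontriviallyNormedField 𝕜]
    {f g : 𝕜 → 𝕜} {s t : Set 𝕜} {f' a : 𝕜} (hf : HasDerivWithinAt f f' s (g a)) (hf' : f' ≠ 0)
    (hg : ContinuousWithinAt g t a) (hgst : MapsTo g t s) (hfg : RightInvOn g f t)
    (ha : a ∈ t) : HasDerivWithinAt g f'⁻¹ t a := by
  rw [hasDerivWithinAt_iff_tendsto_slope] at hf ⊢
  have hgt : Tendsto g (𝓝[t \ {a}] a) (𝓝[s \ {g a}] (g a)) := by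
    refine tendsto_nhdsWithin_iff.2 ⟨hg.mono_left (nhdsWithin_mono _ sdiff_subset), ?_⟩
    filter_upwards [self_mem_nhdsWithin] with x hx
    exact ⟨hgst hx.1, fun hgx => hx.2 (LeftInvOn.injOn hfg hx.1 ha hgx)⟩
  refine ((hf.comp hgt).inv₀ hf').congr' ?_
  filter_upwards [self_mem_nhdsWithin] with x hx
  rw [Function.comp_apply, slope_def_field, slope_def_field, hfg hx.1, hfg ha, inv_div]

theorem ContDiffOn.succ_of_hasDerivWithinAt_comp {V h : ℝ → ℝ} {s t : Set ℝ} {n : ℕ}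
    (hs : UniqueDiffOn ℝ s) (hV : MapsTo V s t) (hh : ContDiffOn ℝ n h t)
    (hder : ∀ x ∈ s, HasDerivWithinAt V (h (V x)) s x) : ContDiffOn ℝ (n + 1) V s := by
  have hdiff : DifferentiableOn ℝ V s := fun x hx => (hder x hx).differentiableWithinAt
  have hderiv : EqOn (derivWithin V s) (h ∘ V) s := fun x hx => (hder x hx).derivWithin (hs x hx)
  suffices ∀ m ≤ n + 1, ContDiffOn ℝ m V s from mod_cast this (n + 1) le_rfl
  intro m hm
  induction m with
  | zero => exact contDiffOn_zero.2 hdiff.continuousOn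
  | succ m ih =>
    rw [Nat.cast_succ, contDiffOn_succ_iff_derivWithin hs]
    refine ⟨hdiff, by simp, ContDiffOn.congr ?_ hderiv⟩
    exact (hh.of_le (mod_cast Nat.le_of_succ_le_succ hm)).comp (ih (by omega)) hV

section Primitive

open intervalIntegral

variable {g : ℝ → ℝ} {a : ℝ}

theorem ContinuousOn.intervalIntegrable_of_Ici {E : Type*} [NormedAddCommGroup E] {g : ℝ → E}
    (hg : ContinuousOn g (Ici a)) {x y : ℝ} (hx : a ≤ x) (hy : a ≤ y) :
    IntervalIntegrable g volume x y :=
  (hg.mono fun _ hu => (le_min hx hy).trans hu.1).intervalIntegrable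

theorem hasDerivWithinAt_integral_Ici {E : Type*} [NormedAddCommGroup E] [NormedSpace ℝ E]
    [CompleteSpace E] {g : ℝ → E} (hg : ContinuousOn g (Ici a)) {y : ℝ} (hy : a ≤ y) :
    HasDerivWithinAt (fun y => ∫ u in a..y, g u) (g y) (Ici a) y := by
  have hint := hg.intervalIntegrable_of_Ici le_rfl hy
  rcases hy.eq_or_lt with rfl | hlt
  · exact integral_hasDerivWithinAt_right hint
      ((hg.mono Ioi_subset_Ici_self).stronglyMeasurableAtFilter_nhdsWithin measurableSet_Ioi a)
      ((hg a self_mem_Ici).mono Ioi_subset_Ici_self)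
  · exact (integral_hasDerivAt_right hint
      ((hg.mono Ioi_subset_Ici_self).stronglyMeasurableAtFilter isOpen_Ioi y hlt)
      ((hg y hy).continuousAt (Ici_mem_nhds hlt))).hasDerivWithinAt

theorem strictMonoOn_integral_Ici (hg : ContinuousOn g (Ici a)) (hpos : ∀ y > a, 0 < g y) :
    StrictMonoOn (fun y => ∫ u in a..y, g u) (Ici a) := by
  refine strictMonoOn_of_deriv_pos (convex_Ici a)
    (fun y hy => (hasDerivWithinAt_integral_Ici hg hy).continuousWithinAt) fun y hy => ?_
  rw [interior_Ici] at hy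
  rw [((hasDerivWithinAt_integral_Ici hg hy.le).hasDerivAt (Ici_mem_nhds hy)).deriv]
  exact hpos y hy

theorem tendsto_integral_Ici_atTop (hg : ContinuousOn g (Ici a)) (hlim : Tendsto g atTop atTop) :
    Tendsto (fun y => ∫ u in a..y, g u) atTop atTop := by
  obtain ⟨z, hz⟩ := eventually_atTop.1 (hlim.eventually_ge_atTop 1)
  set b := max z a
  have hab : a ≤ b := le_max_right z a
  refine tendsto_atTop_mono' _ ?_
    (tendsto_atTop_add_const_right _ ((∫ u in a..b, g u) - b) tendsto_id)
  filter_upwards [eventually_ge_atTop b] with y hby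
  have hay := hab.trans hby
  have hone : y - b ≤ ∫ u in b..y, g u := by
    simpa using integral_mono_on hby intervalIntegrable_const
      (hg.intervalIntegrable_of_Ici hab hay) fun u hu => hz u ((le_max_left z a).trans hu.1)
  rw [← integral_add_adjacent_intervals (hg.intervalIntegrable_of_Ici le_rfl hab)
    (hg.intervalIntegrable_of_Ici hab hay)]
  simp only [id]
  linarith

end Primitive

theorem deriv_ofReal_comp (V : ℝ → ℝ) :
    deriv (fun x => (V x : ℂ)) = fun x => Complex.ofReal (deriv V x) := by
  funext x
  by_cases h : DifferentiableAt ℝ V x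
  · exact h.hasDerivAt.ofReal_comp.deriv
  · have hc : ¬DifferentiableAt ℝ (fun x => (V x : ℂ)) x := fun hc =>
      h (Complex.reCLM.differentiableAt.comp x hc)
    rw [deriv_zero_of_not_differentiableAt h, deriv_zero_of_not_differentiableAt hc,
      Complex.ofReal_zero]

section ImaginaryPotential

variable (V : ℝ → ℝ)

theorem imV_I_mul : ImV (fun x => Complex.I * V x) = V := by
  funext x
  simp [ImV]

theorem reV_I_mul : ReV (fun x => Complex.I * V x) = 0 := by
  funext x
  simp [ReV]

theorem deriv_deriv_I_mul :
    deriv (deriv fun x => Complex.I * V x) =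
      fun x => Complex.I * Complex.ofReal (deriv (deriv V) x) := by
  simp only [deriv_const_mul_field', deriv_ofReal_comp]

end ImaginaryPotential

noncomputable def potentialInv (r : ℝ → ℝ) (κ y : ℝ) : ℝ :=
  κ ^ (-(3:ℝ)/2) * ∫ u in (0:ℝ)..y, r u ^ ((3:ℝ)/2)

section PotentialInv

variable {r : ℝ → ℝ} {κ : ℝ}

theorem potentialInv_zero : potentialInv r κ 0 = 0 := by
  simp [potentialInv]

theorem ContinuousOn.rpow_three_halves (hr : ContinuousOn r (Ici 0)) :
    ContinuousOn (fun u => r u ^ ((3:ℝ)/2)) (Ici 0) :=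
  hr.rpow_const fun _ _ => Or.inr (by norm_num)

theorem hasDerivWithinAt_potentialInv (hr : ContinuousOn r (Ici 0)) {y : ℝ} (hy : 0 ≤ y) :
    HasDerivWithinAt (potentialInv r κ) (κ ^ (-(3:ℝ)/2) * r y ^ ((3:ℝ)/2)) (Ici 0) y :=
  (hasDerivWithinAt_integral_Ici hr.rpow_three_halves hy).const_mul _

theorem continuousOn_potentialInv (hr : ContinuousOn r (Ici 0)) :
    ContinuousOn (potentialInv r κ) (Ici 0) :=
  fun _ hy => (hasDerivWithinAt_potentialInv hr hy).continuousWithinAt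

theorem strictMonoOn_potentialInv (hκ : 0 < κ) (hpos : ∀ y ≥ (0:ℝ), 0 < r y)
    (hr : ContinuousOn r (Ici 0)) : StrictMonoOn (potentialInv r κ) (Ici 0) :=
  (strictMono_mul_left_of_pos (Real.rpow_pos_of_pos hκ _)).comp_strictMonoOn
    (strictMonoOn_integral_Ici hr.rpow_three_halves fun y hy =>
      Real.rpow_pos_of_pos (hpos y hy.le) _)

theorem mapsTo_potentialInv (hκ : 0 < κ) (hpos : ∀ y ≥ (0:ℝ), 0 < r y)
    (hr : ContinuousOn r (Ici 0)) : MapsTo (potentialInv r κ) (Ici 0) (Ici 0) := fun _ hy =>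
  potentialInv_zero (r := r) (κ := κ) ▸
    (strictMonoOn_potentialInv hκ hpos hr).monotoneOn self_mem_Ici hy hy

theorem surjOn_potentialInv (hκ : 0 < κ) (hr : ContinuousOn r (Ici 0))
    (hinfty : Tendsto r atTop atTop) : SurjOn (potentialInv r κ) (Ici 0) (Ici 0) := by
  have htop : Tendsto (potentialInv r κ) atTop atTop :=
    (tendsto_integral_Ici_atTop hr.rpow_three_halves
      ((tendsto_rpow_atTop (by norm_num)).comp hinfty)).const_mul_atTop
      (Real.rpow_pos_of_pos hκ _)
  have := intermediate_value_Ici (continuousOn_potentialInv hr) htop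
  rwa [potentialInv_zero] at this

end PotentialInv

theorem exists_definingEq {r : ℝ → ℝ} {κ : ℝ} (hκ : 0 < κ) (hr : ContinuousOn r (Ici 0))
    (hinfty : Tendsto r atTop atTop) : ∃ V : ℝ → ℝ, DefiningEq r κ V :=
  have hsurj := surjOn_potentialInv hκ hr hinfty
  ⟨_, hsurj.mapsTo_invFunOn, hsurj.rightInvOn_invFunOn⟩

namespace DefiningEq

variable {r : ℝ → ℝ} {κ : ℝ} {V : ℝ → ℝ}

theorem mapsTo (hd : DefiningEq r κ V) : MapsTo V (Ici 0) (Ici 0) := hd.1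

theorem rightInvOn (hd : DefiningEq r κ V) : RightInvOn V (potentialInv r κ) (Ici 0) := hd.2

theorem integral_eq (hκ : 0 < κ) (hd : DefiningEq r κ V) {x : ℝ} (hx : 0 ≤ x) :
    ∫ u in (0:ℝ)..V x, r u ^ ((3:ℝ)/2) = κ ^ ((3:ℝ)/2) * x := by
  have h := hd.rightInvOn hx
  rw [potentialInv] at h
  generalize (∫ u in (0:ℝ)..V x, r u ^ ((3:ℝ)/2)) = I at h ⊢
  rw [← h, ← mul_assoc, ← Real.rpow_add hκ]
  norm_num

theorem pos (hd : DefiningEq r κ V) {x : ℝ} (hx : 0 < x) : 0 < V x := by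
  refine (hd.mapsTo hx.le).lt_of_ne fun h0 => hx.ne ?_
  rw [← hd.rightInvOn hx.le, ← h0, potentialInv_zero]

theorem tendsto_atTop (hκ : 0 < κ) (hpos : ∀ y ≥ (0:ℝ), 0 < r y)
    (hr : ContinuousOn r (Ici 0)) (hd : DefiningEq r κ V) : Tendsto V atTop atTop :=
  (strictMonoOn_potentialInv hκ hpos hr).tendsto_atTop_of_rightInvOn
    (mapsTo_potentialInv hκ hpos hr) hd.mapsTo hd.rightInvOn

theorem continuousOn (hκ : 0 < κ) (hpos : ∀ y ≥ (0:ℝ), 0 < r y)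
    (hr : ContinuousOn r (Ici 0)) (hd : DefiningEq r κ V) : ContinuousOn V (Ici 0) := fun _ hx =>
  (strictMonoOn_potentialInv hκ hpos hr).continuousWithinAt_of_rightInvOn hd.mapsTo
    hd.rightInvOn hx

theorem hasDerivWithinAt (hκ : 0 < κ) (hpos : ∀ y ≥ (0:ℝ), 0 < r y)
    (hr : ContinuousOn r (Ici 0)) (hd : DefiningEq r κ V) {x : ℝ} (hx : 0 ≤ x) :
    HasDerivWithinAt V (κ ^ ((3:ℝ)/2) * r (V x) ^ (-(3:ℝ)/2)) (Ici 0) x := by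
  have hrV := hpos _ (hd.mapsTo hx)
  have hinv : (κ ^ (-(3:ℝ)/2) * r (V x) ^ ((3:ℝ)/2))⁻¹ =
      κ ^ ((3:ℝ)/2) * r (V x) ^ (-(3:ℝ)/2) := by
    rw [mul_inv, ← Real.rpow_neg hκ.le, ← Real.rpow_neg hrV.le]
    norm_num
  exact hinv ▸ (hasDerivWithinAt_potentialInv hr (hd.mapsTo hx)).of_rightInvOn
    (by positivity) (hd.continuousOn hκ hpos hr x hx) hd.mapsTo hd.rightInvOn hx

theorem hasDerivAt (hκ : 0 < κ) (hpos : ∀ y ≥ (0:ℝ), 0 < r y) (hr : ContinuousOn r (Ici 0))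
    (hd : DefiningEq r κ V) {x : ℝ} (hx : 0 < x) :
    HasDerivAt V (κ ^ ((3:ℝ)/2) * r (V x) ^ (-(3:ℝ)/2)) x :=
  (hd.hasDerivWithinAt hκ hpos hr hx.le).hasDerivAt (Ici_mem_nhds hx)

theorem contDiffOn (hκ : 0 < κ) (hpos : ∀ y ≥ (0:ℝ), 0 < r y)
    (hr : ContDiffOn ℝ 1 r (Ici 0)) (hd : DefiningEq r κ V) : ContDiffOn ℝ 2 V (Ici 0) :=
  ContDiffOn.succ_of_hasDerivWithinAt_comp (n := 1) (uniqueDiffOn_Ici 0) hd.mapsTo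
    (contDiffOn_const.mul (hr.rpow_const_of_ne fun y hy => (hpos y hy).ne'))
    fun _ hx => hd.hasDerivWithinAt hκ hpos hr.continuousOn hx

theorem deriv_eq (hκ : 0 < κ) (hpos : ∀ y ≥ (0:ℝ), 0 < r y) (hr : ContinuousOn r (Ici 0))
    (hd : DefiningEq r κ V) {x : ℝ} (hx : 0 < x) :
    deriv V x = κ ^ ((3:ℝ)/2) * r (V x) ^ (-(3:ℝ)/2) :=
  (hd.hasDerivAt hκ hpos hr hx).deriv

theorem deriv_pos (hκ : 0 < κ) (hpos : ∀ y ≥ (0:ℝ), 0 < r y) (hr : ContinuousOn r (Ici 0))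
    (hd : DefiningEq r κ V) {x : ℝ} (hx : 0 < x) : 0 < deriv V x := by
  have hρ := hpos _ (hd.mapsTo hx.le)
  rw [hd.deriv_eq hκ hpos hr hx]
  positivity

theorem deriv_rpow (hκ : 0 < κ) (hpos : ∀ y ≥ (0:ℝ), 0 < r y) (hr : ContinuousOn r (Ici 0))
    (hd : DefiningEq r κ V) {x : ℝ} (hx : 0 < x) (p : ℝ) :
    deriv V x ^ p = κ ^ ((3:ℝ)/2 * p) * r (V x) ^ (-(3:ℝ)/2 * p) := by
  have hrV := hpos _ (hd.mapsTo hx.le)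
  rw [hd.deriv_eq hκ hpos hr hx, Real.mul_rpow (by positivity) (by positivity),
    ← Real.rpow_mul hκ.le, ← Real.rpow_mul hrV.le]

theorem mul_deriv_eq (hκ : 0 < κ) (hpos : ∀ y ≥ (0:ℝ), 0 < r y)
    (hr : ContinuousOn r (Ici 0)) (hd : DefiningEq r κ V) {x : ℝ} (hx : 0 < x) :
    x * deriv V x = r (V x) ^ (-(3:ℝ)/2) * ∫ u in (0:ℝ)..V x, r u ^ ((3:ℝ)/2) := by
  rw [hd.deriv_eq hκ hpos hr hx, hd.integral_eq hκ hx.le]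
  ring

theorem abs_deriv_deriv (hκ : 0 < κ) (hpos : ∀ y ≥ (0:ℝ), 0 < r y)
    (hr : ContinuousOn r (Ici 0)) (hd : DefiningEq r κ V) {x : ℝ} (hx : 0 < x)
    (hrV : DifferentiableAt ℝ r (V x)) :
    |deriv (deriv V) x| =
      (3/2) * κ ^ ((3:ℝ)/2) * |deriv r (V x)| * r (V x) ^ (-(5:ℝ)/2) * deriv V x := by
  have hρ := hpos _ (hd.mapsTo hx.le)
  have hV' := hd.hasDerivAt hκ hpos hr hx
  have hderiv : (fun t => κ ^ ((3:ℝ)/2) * r (V t) ^ (-(3:ℝ)/2)) =ᶠ[𝓝 x] deriv V :=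
    eventually_of_mem (Ioi_mem_nhds hx) fun t ht => (hd.deriv_eq hκ hpos hr ht).symm
  have hV'' : HasDerivAt (fun t => κ ^ ((3:ℝ)/2) * r (V t) ^ (-(3:ℝ)/2)) _ x :=
    ((hrV.hasDerivAt.comp x hV').rpow_const (Or.inl hρ.ne')).const_mul _
  rw [← hderiv.deriv_eq, hV''.deriv, hV'.deriv, Function.comp_apply,
    show -(3:ℝ)/2 - 1 = -(5:ℝ)/2 by norm_num]
  simp only [abs_mul, abs_of_pos (Real.rpow_pos_of_pos hκ _),
    abs_of_pos (Real.rpow_pos_of_pos hρ _)]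
  norm_num
  ring

theorem deriv_le (hκ : 0 < κ) (hpos : ∀ y ≥ (0:ℝ), 0 < r y) (hr : ContinuousOn r (Ici 0))
    (hd : DefiningEq r κ V) {x C : ℝ} (hx : 0 < x)
    (hC : ∫ u in (0:ℝ)..V x, r u ^ ((3:ℝ)/2) ≤ C * V x * r (V x) ^ ((3:ℝ)/2)) :
    deriv V x ≤ C * V x * x ^ (-1:ℝ) := by
  have hρ := hpos _ (hd.mapsTo hx.le)
  rw [Real.rpow_neg_one, le_mul_inv_iff₀ hx, mul_comm, hd.mul_deriv_eq hκ hpos hr hx]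
  calc r (V x) ^ (-(3:ℝ)/2) * ∫ u in (0:ℝ)..V x, r u ^ ((3:ℝ)/2)
      ≤ r (V x) ^ (-(3:ℝ)/2) * (C * V x * r (V x) ^ ((3:ℝ)/2)) := by gcongr
    _ = C * V x := by
      rw [mul_comm, mul_assoc, ← Real.rpow_add hρ]
      norm_num

theorem abs_deriv_deriv_le (hκ : 0 < κ) (hpos : ∀ y ≥ (0:ℝ), 0 < r y)
    (hr : ContinuousOn r (Ici 0)) (hd : DefiningEq r κ V) {x C : ℝ} (hx : 0 < x)
    (hrV : DifferentiableAt ℝ r (V x))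
    (hC : |deriv r (V x)| * r (V x) ^ (-(5:ℝ)/2) * ∫ u in (0:ℝ)..V x, r u ^ ((3:ℝ)/2) ≤ C) :
    |deriv (deriv V) x| ≤ 3/2 * C * deriv V x * x ^ (-1:ℝ) := by
  have hV' := (hd.deriv_pos hκ hpos hr hx).le
  rw [hd.abs_deriv_deriv hκ hpos hr hx hrV, Real.rpow_neg_one, le_mul_inv_iff₀ hx]
  rw [hd.integral_eq hκ hx.le] at hC
  calc 3/2 * κ ^ ((3:ℝ)/2) * |deriv r (V x)| * r (V x) ^ (-(5:ℝ)/2) * deriv V x * x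
      = 3/2 * (|deriv r (V x)| * r (V x) ^ (-(5:ℝ)/2) * (κ ^ ((3:ℝ)/2) * x)) * deriv V x := by
        ring
    _ ≤ 3/2 * C * deriv V x := by gcongr

theorem rpow_neg_one_mul_deriv_rpow (hκ : 0 < κ) (hpos : ∀ y ≥ (0:ℝ), 0 < r y)
    (hr : ContinuousOn r (Ici 0)) (hd : DefiningEq r κ V) {x : ℝ} (hx : 0 < x) :
    x ^ (-1:ℝ) * deriv V x ^ (-(1:ℝ)/3) =
      κ * (r (V x) ^ ((1:ℝ)/2) / ∫ u in (0:ℝ)..V x, r u ^ ((3:ℝ)/2)) := by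
  rw [hd.deriv_rpow hκ hpos hr hx, hd.integral_eq hκ hx.le, Real.rpow_neg_one]
  have hk := Real.rpow_pos_of_pos hκ ((3:ℝ)/2)
  field_simp
  rw [mul_right_comm, ← Real.rpow_add hκ]
  norm_num
  ring

theorem mul_deriv_rpow (hκ : 0 < κ) (hpos : ∀ y ≥ (0:ℝ), 0 < r y)
    (hr : ContinuousOn r (Ici 0)) (hd : DefiningEq r κ V) {x : ℝ} (hx : 0 < x) :
    κ * deriv V x ^ (-(2:ℝ)/3) = r (V x) := by
  rw [hd.deriv_rpow hκ hpos hr hx]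
  norm_num
  rw [Real.rpow_neg_one, mul_inv_cancel_left₀ hκ.ne']

theorem assumptionIR (hκ : 0 < κ) (hpos : ∀ y ≥ (0:ℝ), 0 < r y)
    (hC1 : ContDiffOn ℝ 1 r (Ici 0))
    (h1 : ∃ C₁ > 0, ∀ᶠ y in atTop,
        (∫ u in (0:ℝ)..y, r u ^ ((3:ℝ)/2)) ≤ C₁ * y * r y ^ ((3:ℝ)/2))
    (h2 : ∃ C₂ > 0, ∀ᶠ y in atTop,
        |deriv r y| * r y ^ (-(5:ℝ)/2) * (∫ u in (0:ℝ)..y, r u ^ ((3:ℝ)/2)) ≤ C₂)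
    (h3 : Tendsto (fun y => r y ^ ((1:ℝ)/2) / ∫ u in (0:ℝ)..y, r u ^ ((3:ℝ)/2))
        atTop (𝓝 0))
    (hd : DefiningEq r κ V) :
    ∃ x₀ : ℝ, AssumptionIR (fun x => Complex.I * V x) x₀ (-1) 0 := by
  have hr := hC1.continuousOn
  obtain ⟨C₁, hC₁, h1⟩ := h1
  obtain ⟨C₂, -, h2⟩ := h2
  have hV := hd.tendsto_atTop hκ hpos hr
  obtain ⟨x₁, hx₁⟩ := eventually_atTop.1 (hV.eventually (h1.and h2))
  set x₀ := max x₁ 0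
  have hx₀ : ∀ x > x₀, 0 < x := fun x hx => (le_max_right x₁ 0).trans_lt hx
  refine ⟨x₀, le_max_right x₁ 0, le_rfl, le_rfl, fun K hK => ?_, ?_, ?_, ?_, fun x hx => ?_,
    ⟨max C₁ (3/2 * C₂), lt_max_of_lt_left hC₁, fun x hx => ⟨?_, ?_⟩⟩, ?_, ?_⟩
  · obtain ⟨M, hM⟩ := (hK.inter_right isClosed_Ici).exists_bound_of_continuousOn
      (continuousOn_const.mul (Complex.continuous_ofReal.comp_continuousOn
        ((hd.continuousOn hκ hpos hr).mono inter_subset_right)))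
    exact ⟨M, hM⟩
  · exact (contDiffOn_const.mul (Complex.ofRealCLM.contDiff.comp_contDiffOn
      (hd.contDiffOn hκ hpos hC1))).mono fun x hx => (hx₀ x hx).le
  · exact .of_forall fun x => by simp
  · rwa [imV_I_mul]
  · rw [imV_I_mul]
    exact hd.deriv_pos hκ hpos hr (hx₀ x hx)
  · have hx0 := hx₀ x hx
    have hVx : 0 ≤ V x := hd.mapsTo hx0.le
    rw [imV_I_mul]
    refine (hd.deriv_le hκ hpos hr hx0 (hx₁ x ((le_max_left _ _).trans hx.le)).1).trans ?_
    gcongr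
    exact le_max_left _ _
  · have hx0 := hx₀ x hx
    have hV' := (hd.deriv_pos hκ hpos hr hx0).le
    have hrV : DifferentiableAt ℝ r (V x) := (hC1.differentiableOn one_ne_zero _
      (hd.mapsTo hx0.le)).differentiableAt (Ici_mem_nhds (hd.pos hx0))
    rw [deriv_deriv_I_mul, imV_I_mul, norm_mul, Complex.norm_I, one_mul, Complex.norm_real,
      Real.norm_eq_abs]
    refine (hd.abs_deriv_deriv_le hκ hpos hr hx0 hrV
      (hx₁ x ((le_max_left _ _).trans hx.le)).2).trans ?_
    gcongr
    exact le_max_right _ _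
  · have hlim := (h3.comp hV).const_mul κ
    rw [mul_zero] at hlim
    refine hlim.congr' ?_
    filter_upwards [eventually_gt_atTop 0] with x hx
    rw [Upsilon, imV_I_mul, hd.rpow_neg_one_mul_deriv_rpow hκ hpos hr hx]
    rfl
  · simp [reV_I_mul]

end DefiningEq

/-- first part of Proposition `prop:batty`: given a rate r satisfying
conditions (1)–(3), there exists a unique V₂ : [0,∞) → [0,∞) solving the defining
equation; this V₂ is C², the potential V = iV₂ satisfies Assumption (iR) with
ν = −1 and l = 0, and κ·(V₂'(x_b))^{−2/3} = r(b) for all large b, where V₂(x_b) = b. -/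
theorem statement19 (r : ℝ → ℝ) (κ : ℝ) (hκ : 0 < κ)
    (hpos : ∀ y ≥ (0:ℝ), 0 < r y)
    (hC1 : ContDiffOn ℝ 1 r (Set.Ici (0:ℝ)))
    (hinfty : Tendsto r atTop atTop)
    (h1 : ∃ C₁ > 0, ∀ᶠ y in atTop,
        (∫ u in (0:ℝ)..y, r u ^ ((3:ℝ)/2)) ≤ C₁ * y * r y ^ ((3:ℝ)/2))
    (h2 : ∃ C₂ > 0, ∀ᶠ y in atTop,
        |deriv r y| * r y ^ (-(5:ℝ)/2) * (∫ u in (0:ℝ)..y, r u ^ ((3:ℝ)/2)) ≤ C₂)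
    (h3 : Tendsto (fun y => r y ^ ((1:ℝ)/2) / ∫ u in (0:ℝ)..y, r u ^ ((3:ℝ)/2))
        atTop (nhds 0)) :
    (∃ V₂ : ℝ → ℝ, DefiningEq r κ V₂) ∧
    (∀ V₂ W₂ : ℝ → ℝ, DefiningEq r κ V₂ → DefiningEq r κ W₂ → ∀ x ≥ (0:ℝ), V₂ x = W₂ x) ∧
    (∀ V₂ : ℝ → ℝ, DefiningEq r κ V₂ →
      ContDiffOn ℝ 2 V₂ (Set.Ici (0:ℝ)) ∧
      (∃ x₀ : ℝ, AssumptionIR (fun x => Complex.I * Complex.ofReal (V₂ x)) x₀ (-1) 0) ∧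
      (∃ b₀ : ℝ, ∀ b ≥ b₀, ∀ xb ≥ (0:ℝ), V₂ xb = b →
        κ * deriv V₂ xb ^ (-(2:ℝ)/3) = r b)) := by
  have hr := hC1.continuousOn
  have hmono := strictMonoOn_potentialInv hκ hpos hr
  refine ⟨exists_definingEq hκ hr hinfty, fun V W hV hW x hx => ?_, fun V hd =>
    ⟨hd.contDiffOn hκ hpos hC1, hd.assumptionIR hκ hpos hC1 h1 h2 h3, 1,
      fun b hb xb hxb hVb => ?_⟩⟩
  · exact hmono.injOn (hV.mapsTo hx) (hW.mapsTo hx)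
      ((hV.rightInvOn hx).trans (hW.rightInvOn hx).symm)
  · have hxb_pos : 0 < xb := by
      rw [← hd.rightInvOn hxb, hVb, ← potentialInv_zero (r := r) (κ := κ)]
      exact hmono self_mem_Ici (zero_le_one.trans hb) (zero_lt_one.trans_le hb)
    rw [← hVb, hd.mul_deriv_rpow hκ hpos hr hxb_pos]
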